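/- arXiv:1804.10307 — 3 statements merged into one kernel-verified Lean document; each statement's English description precedes it below -/
import Mathlib

section
/- Let M be a real symmetric invertible N×N matrix, A a real anti-symmetric N×N matrix, Δt ∈ ℝ, and r ∈ ℕ. Suppose the sequence u⁰, u¹, u², … in ℝ^N satisfies the Lax-Wendroff recursion u^{n+1} - u^{n-1} = Σ_{i=0}^{r} (2Δt^{2i+1}/(2i+1)!) (M⁻¹A)^{2i+1} u^{n} for every n ≥ 1. Then for every n ≥ 1, (M u^{n+1}) · u^{n} = (M u^{n}) · u^{n-1}. -/
open Matrix Finset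

lemma lw_conj_pow {N : ℕ} (M B : Matrix (Fin N) (Fin N) ℝ)
    (hl : M⁻¹ * M = 1) (hr : M * M⁻¹ = 1) :
    ∀ k : ℕ, (M * B * M⁻¹) ^ k = M * B ^ k * M⁻¹ := by
  intro k
  induction k with
  | zero => simp [hr]
  | succ k ih =>
      rw [pow_succ, pow_succ, ih]
      have : M⁻¹ * (M * B * M⁻¹) = B * M⁻¹ := by
        rw [← mul_assoc, ← mul_assoc, hl, one_mul]
      rw [mul_assoc (M * B ^ k) M⁻¹, this, ← mul_assoc, ← mul_assoc]

lemma lw_antisym_dot {N : ℕ} (C : Matrix (Fin N) (Fin N) ℝ) (hC : Cᵀ = -C)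
    (v : Fin N → ℝ) : C.mulVec v ⬝ᵥ v = 0 := by
  have h1 : C.mulVec v ⬝ᵥ v = v ⬝ᵥ C.mulVec v := dotProduct_comm _ _
  have h2 : v ⬝ᵥ C.mulVec v = Cᵀ.mulVec v ⬝ᵥ v := by
    rw [dotProduct_mulVec, mulVec_transpose]
  have h3 : Cᵀ.mulVec v ⬝ᵥ v = -(C.mulVec v ⬝ᵥ v) := by
    rw [hC, neg_mulVec, neg_dotProduct]
  linarith [h1.trans (h2.trans h3)]

/-- Energy conservation of the explicit Lax-Wendroff time discretization: if `M` is a real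
symmetric invertible `N × N` matrix, `A` is anti-symmetric, and the sequence `u⁰, u¹, …`
satisfies `u^{n+1} - u^{n-1} = ∑_{i=0}^{r} (2Δt^{2i+1}/(2i+1)!)(M⁻¹A)^{2i+1} u^{n}` for all
`n ≥ 1`, then the staggered discrete energy `(M u^{n+1}) ⬝ u^{n}` is conserved:
`(M u^{n+1}) ⬝ u^{n} = (M u^{n}) ⬝ u^{n-1}` for all `n ≥ 1`. -/
theorem lax_wendroff_energy_conservation {N : ℕ} (M A : Matrix (Fin N) (Fin N) ℝ)
    (hM : Mᵀ = M) (hMinv : IsUnit M) (hA : Aᵀ = -A)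
    (Δt : ℝ) (r : ℕ) (u : ℕ → Fin N → ℝ)
    (hrec : ∀ n : ℕ, 1 ≤ n →
      u (n + 1) - u (n - 1) =
        ∑ i ∈ Finset.range (r + 1),
          ((2 * Δt ^ (2 * i + 1)) / (Nat.factorial (2 * i + 1) : ℝ)) •
            ((M⁻¹ * A) ^ (2 * i + 1)).mulVec (u n)) :
    ∀ n : ℕ, 1 ≤ n → M.mulVec (u (n + 1)) ⬝ᵥ u n = M.mulVec (u n) ⬝ᵥ u (n - 1) := by
  have hdet : IsUnit M.det := (Matrix.isUnit_iff_isUnit_det M).mp hMinv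
  have hr : M * M⁻¹ = 1 := Matrix.mul_nonsing_inv M hdet
  have hl : M⁻¹ * M = 1 := Matrix.nonsing_inv_mul M hdet
  set B := M⁻¹ * A with hB
  -- transpose of B
  have hMinvT : (M⁻¹)ᵀ = M⁻¹ := by
    rw [Matrix.transpose_nonsing_inv, hM]
  have hBT : Bᵀ = -(M * B * M⁻¹) := by
    rw [hB, Matrix.transpose_mul, hMinvT, hA]
    have : M * (M⁻¹ * A) * M⁻¹ = A * M⁻¹ := by
      rw [← mul_assoc, hr, one_mul]
    rw [this, neg_mul]
  -- key antisymmetry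
  have hkey : ∀ i : ℕ, (M * B ^ (2 * i + 1))ᵀ = -(M * B ^ (2 * i + 1)) := by
    intro i
    have hodd : Odd (2 * i + 1) := ⟨i, by ring⟩
    rw [Matrix.transpose_mul, hM, Matrix.transpose_pow, hBT, hodd.neg_pow,
      lw_conj_pow M B hl hr, neg_mul, mul_assoc, hl, mul_one]
  intro n hn
  have hrec' := hrec n hn
  have hu : u (n + 1) = u (n - 1) + ∑ i ∈ Finset.range (r + 1),
      ((2 * Δt ^ (2 * i + 1)) / (Nat.factorial (2 * i + 1) : ℝ)) •
        (B ^ (2 * i + 1)).mulVec (u n) := by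
    rw [← hrec']; abel
  rw [hu, Matrix.mulVec_add, add_dotProduct]
  have hzero : M.mulVec (∑ i ∈ Finset.range (r + 1),
      ((2 * Δt ^ (2 * i + 1)) / (Nat.factorial (2 * i + 1) : ℝ)) •
        (B ^ (2 * i + 1)).mulVec (u n)) ⬝ᵥ u n = 0 := by
    have hsum : ∀ (f : ℕ → Fin N → ℝ) (s : Finset ℕ),
        (∑ i ∈ s, f i) ⬝ᵥ u n = ∑ i ∈ s, f i ⬝ᵥ u n := fun f s =>
      map_sum (AddMonoidHom.mk' (fun v => v ⬝ᵥ u n)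
        (fun a b => add_dotProduct a b (u n))) f s
    rw [← Matrix.mulVecLin_apply, map_sum, hsum]
    simp only [Matrix.mulVecLin_apply]
    refine Finset.sum_eq_zero fun i _ => ?_
    rw [Matrix.mulVec_smul, smul_dotProduct]
    have : M.mulVec ((B ^ (2 * i + 1)).mulVec (u n)) =
        (M * B ^ (2 * i + 1)).mulVec (u n) := by
      rw [← Matrix.mulVec_mulVec]
    rw [this, lw_antisym_dot _ (hkey i), smul_zero]
  rw [hzero, add_zero]
  rw [dotProduct_comm, dotProduct_mulVec, ← mulVec_transpose, hM]
end

section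
/- Let k ∈ ℕ, let a < b be real numbers, and let u, φ : [a, b] → ℝ be continuous. Then there exists a unique pair (p, q) of real polynomials of degree at most k such that: (i) ∫ₐᵇ (p - u) r dx = 0 and ∫ₐᵇ (q - φ) r dx = 0 for every polynomial r of degree at most k - 1; (ii) p(a) + q(a) = u(a) + φ(a); and (iii) p(b) - q(b) = u(b) - φ(b). Moreover p = (1/2)(P_a(u+φ) + P_b(u-φ)) and q = (1/2)(P_a(u+φ) - P_b(u-φ)), where for a continuous function v, P_a v (respectively P_b v) denotes the unique polynomial of degree at most k that is orthogonal to all polynomials of degree at most k - 1 in the L²(a,b) inner product against v and matches v at the endpoint a (respectively b). -/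
open Polynomial intervalIntegral

/-- `P` is the degree-`≤ k` Gauss-Radau projection of `v` on `[a,b]` matching `v` at the
point `c`: it is `L²(a,b)`-orthogonal to all polynomials of degree at most `k-1` against `v`
and `P(c) = v(c)`. -/
def IsGaussRadauProj (k : ℕ) (a b c : ℝ) (v : ℝ → ℝ) (P : Polynomial ℝ) : Prop :=
  P.degree ≤ (k : WithBot ℕ) ∧ P.eval c = v c ∧
    ∀ r : Polynomial ℝ, r.degree < (k : WithBot ℕ) →
      ∫ x in a..b, (P.eval x - v x) * r.eval x = 0

/-- `(p, q)` is the coupled auxiliary projection of `(u, φ)` on `[a,b]` with polynomial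
degree `k`: both have degree at most `k`, both are `L²(a,b)`-orthogonal to polynomials of
degree at most `k-1` against `u` resp. `φ`, and the coupled endpoint conditions
`p(a) + q(a) = u(a) + φ(a)` and `p(b) - q(b) = u(b) - φ(b)` hold. -/
def IsCoupledProj (k : ℕ) (a b : ℝ) (u φ : ℝ → ℝ) (p q : Polynomial ℝ) : Prop :=
  p.degree ≤ (k : WithBot ℕ) ∧ q.degree ≤ (k : WithBot ℕ) ∧
    (∀ r : Polynomial ℝ, r.degree < (k : WithBot ℕ) →
      ∫ x in a..b, (p.eval x - u x) * r.eval x = 0) ∧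
    (∀ r : Polynomial ℝ, r.degree < (k : WithBot ℕ) →
      ∫ x in a..b, (q.eval x - φ x) * r.eval x = 0) ∧
    p.eval a + q.eval a = u a + φ a ∧
    p.eval b - q.eval b = u b - φ b

open Set
open MeasureTheory (volume)

/-! If `(p, q)` is the coupled projection, then `p + q` and `p - q` satisfy the Gauss-Radau
conditions for `u + φ` at `a` and for `u - φ` at `b`, and conversely; so everything reduces to
the Gauss-Radau projection. It is unique: a difference `P` of two such projections has degree
at most `k` and vanishes at the matching point `c ∉ (a, b)`, so `P = (X - c) Q` with
`deg Q < k`, and orthogonality against `Q` gives `∫ (x - c) Q(x)² dx = 0` with an integrand of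
constant sign, whence `Q = 0`. Existence then follows by counting dimensions: the `k + 1`
conditions are linear on the `(k + 1)`-dimensional space of polynomials of degree at most `k`. -/

section GaussRadau

variable {k : ℕ} {a b c : ℝ}

def OrthToDegreeLT (k : ℕ) (a b : ℝ) (f : ℝ → ℝ) : Prop :=
  ∀ r : ℝ[X], r.degree < k → ∫ x in a..b, f x * r.eval x = 0

lemma OrthToDegreeLT.linearCombination {f g h : ℝ → ℝ} (hfi : IntervalIntegrable f volume a b)
    (hgi : IntervalIntegrable g volume a b) (hf : OrthToDegreeLT k a b f)
    (hg : OrthToDegreeLT k a b g) (α β : ℝ) (hh : ∀ x, h x = α * f x + β * g x) :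
    OrthToDegreeLT k a b h := by
  intro r hr
  have hfr := (hfi.mul_continuousOn r.continuous.continuousOn).const_mul α
  have hgr := (hgi.mul_continuousOn r.continuous.continuousOn).const_mul β
  simp_rw [hh, add_mul, mul_assoc]
  rw [integral_add hfr hgr, integral_const_mul, integral_const_mul, hf r hr, hg r hr]
  ring

lemma intervalIntegrable_eval_sub (P : ℝ[X]) {v : ℝ → ℝ}
    (hv : IntervalIntegrable v volume a b) :
    IntervalIntegrable (fun x => P.eval x - v x) volume a b :=
  (P.continuous.intervalIntegrable a b).sub hv

lemma Polynomial.eq_zero_of_intervalIntegral_eq_zero_of_nonneg (hab : a < b) {g : ℝ[X]}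
    (hg : ∀ x ∈ Ioc a b, 0 ≤ g.eval x) (h : ∫ x in a..b, g.eval x = 0) : g = 0 := by
  by_contra hg0
  obtain ⟨x, hx, hgx⟩ : ∃ x ∈ Ioo a b, ¬ g.IsRoot x :=
    ((Ioo_infinite hab).sdiff (finite_setOfPred_isRoot hg0)).nonempty
  have hpos : 0 < g.eval x := (hg x (Ioo_subset_Ioc_self hx)).lt_of_ne' hgx
  exact (integral_pos hab g.continuous.continuousOn hg ⟨x, Ioo_subset_Icc_self hx, hpos⟩).ne' h

lemma eq_zero_of_orthToDegreeLT_of_eval_eq_zero (hab : a < b) (hc : c ≤ a ∨ b ≤ c)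
    {P : ℝ[X]} (hdeg : P.degree ≤ k) (hPc : P.eval c = 0)
    (horth : OrthToDegreeLT k a b P.eval) : P = 0 := by
  obtain ⟨Q, rfl⟩ := dvd_iff_isRoot.2 hPc
  rcases eq_or_ne Q 0 with rfl | hQ
  · exact mul_zero _
  have hQdeg : Q.degree < k := by
    refine (degree_lt_degree ?_).trans_le hdeg
    rw [natDegree_mul (X_sub_C_ne_zero c) hQ, natDegree_X_sub_C]
    omega
  have hint : ∫ x in a..b, (x - c) * Q.eval x ^ 2 = 0 := by
    simpa [mul_assoc, sq] using horth Q hQdeg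
  have hsq : (X - C c) * Q ^ 2 = 0 := by
    rcases hc with hca | hbc
    · refine eq_zero_of_intervalIntegral_eq_zero_of_nonneg hab (fun x hx => ?_) (by simpa)
      simpa using mul_nonneg (sub_nonneg.2 (hca.trans hx.1.le)) (sq_nonneg (Q.eval x))
    · refine neg_eq_zero.1
        (eq_zero_of_intervalIntegral_eq_zero_of_nonneg hab (fun x hx => ?_) ?_)
      · simpa using mul_nonpos_of_nonpos_of_nonneg (sub_nonpos.2 (hx.2.trans hbc))
          (sq_nonneg (Q.eval x))
      · simpa [integral_neg] using hint
  simp [X_sub_C_ne_zero, hQ] at hsq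

lemma IsGaussRadauProj.unique (hab : a < b) (hc : c ≤ a ∨ b ≤ c) {v : ℝ → ℝ}
    (hv : IntervalIntegrable v volume a b) {P₁ P₂ : ℝ[X]}
    (h₁ : IsGaussRadauProj k a b c v P₁) (h₂ : IsGaussRadauProj k a b c v P₂) : P₁ = P₂ := by
  obtain ⟨hdeg₁, hc₁, horth₁⟩ := h₁
  obtain ⟨hdeg₂, hc₂, horth₂⟩ := h₂
  refine sub_eq_zero.1 (eq_zero_of_orthToDegreeLT_of_eval_eq_zero hab hc
    ((degree_sub_le _ _).trans (max_le hdeg₁ hdeg₂)) (by simp [hc₁, hc₂]) ?_)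
  exact OrthToDegreeLT.linearCombination (intervalIntegrable_eval_sub P₁ hv)
    (intervalIntegrable_eval_sub P₂ hv) horth₁ horth₂ 1 (-1) fun x => by simp

noncomputable def intervalPairing (f : ℝ → ℝ) (hf : IntervalIntegrable f volume a b) :
    ℝ[X] →ₗ[ℝ] ℝ where
  toFun r := ∫ x in a..b, f x * r.eval x
  map_add' r s := by
    simp only [eval_add, mul_add]
    exact integral_add (hf.mul_continuousOn r.continuous.continuousOn)
      (hf.mul_continuousOn s.continuous.continuousOn)
  map_smul' t r := by
    simp only [eval_smul, smul_eq_mul, mul_left_comm _ t, intervalIntegral.integral_const_mul,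
      RingHom.id_apply]

variable (k a b c) in
noncomputable def gaussRadauConditions :
    degreeLT ℝ (k + 1) →ₗ[ℝ] Module.Dual ℝ (degreeLT ℝ k) × ℝ where
  toFun P := ((intervalPairing P.1.eval (P.1.continuous.intervalIntegrable a b)).domRestrict _,
    P.1.eval c)
  map_add' P Q := by
    ext r
    · simp only [intervalPairing, Submodule.coe_add, eval_add, add_mul]
      exact integral_add ((P.1.continuous.mul r.1.continuous).intervalIntegrable a b)
        ((Q.1.continuous.mul r.1.continuous).intervalIntegrable a b)
    · simp
  map_smul' t P := by
    ext r
    · simp [intervalPairing, mul_assoc]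
    · simp

lemma gaussRadauConditions_injective (hab : a < b) (hc : c ≤ a ∨ b ≤ c) :
    Function.Injective (gaussRadauConditions k a b c) := by
  rw [← LinearMap.ker_eq_bot, Submodule.eq_bot_iff]
  rintro ⟨P, hP⟩ hker
  obtain ⟨horth, hPc⟩ := Prod.ext_iff.1 hker
  refine Submodule.coe_eq_zero.1 (eq_zero_of_orthToDegreeLT_of_eval_eq_zero hab hc
    (mem_degreeLE.1 (degreeLT_succ_eq_degreeLE (R := ℝ) ▸ hP)) hPc fun r hr => ?_)
  exact LinearMap.congr_fun horth ⟨r, mem_degreeLT.2 hr⟩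

lemma gaussRadauConditions_bijective (hab : a < b) (hc : c ≤ a ∨ b ≤ c) :
    Function.Bijective (gaussRadauConditions k a b c) := by
  have hdim : Module.finrank ℝ (degreeLT ℝ (k + 1))
      = Module.finrank ℝ (Module.Dual ℝ (degreeLT ℝ k) × ℝ) := by
    simp [Module.finrank_prod, Subspace.dual_finrank_eq, (degreeLTEquiv ℝ _).finrank_eq]
  have hinj := gaussRadauConditions_injective (k := k) hab hc
  exact ⟨hinj, (LinearMap.injective_iff_surjective_of_finrank_eq_finrank hdim).1 hinj⟩

lemma exists_isGaussRadauProj (hab : a < b) (hc : c ≤ a ∨ b ≤ c) {v : ℝ → ℝ}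
    (hv : IntervalIntegrable v volume a b) : ∃ P, IsGaussRadauProj k a b c v P := by
  obtain ⟨⟨P, hP⟩, hPv⟩ := (gaussRadauConditions_bijective hab hc).2
    ((intervalPairing v hv).domRestrict (degreeLT ℝ k), v c)
  obtain ⟨hpair, hPc⟩ := Prod.ext_iff.1 hPv
  refine ⟨P, mem_degreeLE.1 (degreeLT_succ_eq_degreeLE (R := ℝ) ▸ hP), hPc, fun r hr => ?_⟩
  have hr' := LinearMap.congr_fun hpair ⟨r, mem_degreeLT.2 hr⟩
  simp only [sub_mul]
  rw [integral_sub
    ((P.continuous.intervalIntegrable a b).mul_continuousOn r.continuous.continuousOn)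
    (hv.mul_continuousOn r.continuous.continuousOn)]
  exact sub_eq_zero.2 hr'

lemma isCoupledProj_iff {u φ : ℝ → ℝ} (hu : IntervalIntegrable u volume a b)
    (hφ : IntervalIntegrable φ volume a b) {p q : ℝ[X]} :
    IsCoupledProj k a b u φ p q ↔
      IsGaussRadauProj k a b a (fun x => u x + φ x) (p + q) ∧
        IsGaussRadauProj k a b b (fun x => u x - φ x) (p - q) := by
  constructor
  · rintro ⟨hp, hq, hpu, hqφ, ha, hb⟩
    have hpu' := intervalIntegrable_eval_sub p hu
    have hqφ' := intervalIntegrable_eval_sub q hφ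
    refine ⟨⟨(degree_add_le _ _).trans (max_le hp hq), by simp [ha], ?_⟩,
      ⟨(degree_sub_le _ _).trans (max_le hp hq), by simp [hb], ?_⟩⟩
    · exact OrthToDegreeLT.linearCombination hpu' hqφ' hpu hqφ 1 1 fun x => by simp; ring
    · exact OrthToDegreeLT.linearCombination hpu' hqφ' hpu hqφ 1 (-1) fun x => by simp; ring
  · rintro ⟨⟨hs, ha, hso⟩, ⟨hd, hb, hdo⟩⟩
    have hso' := intervalIntegrable_eval_sub (p + q) (hu.add hφ)
    have hdo' := intervalIntegrable_eval_sub (p - q) (hu.sub hφ)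
    have hp : p = (2⁻¹ : ℝ) • ((p + q) + (p - q)) := by module
    have hq : q = (2⁻¹ : ℝ) • ((p + q) - (p - q)) := by module
    refine ⟨?_, ?_, ?_, ?_, by simpa using ha, by simpa using hb⟩
    · rw [hp]
      exact (degree_smul_le _ _).trans ((degree_add_le _ _).trans (max_le hs hd))
    · rw [hq]
      exact (degree_smul_le _ _).trans ((degree_sub_le _ _).trans (max_le hs hd))
    · exact OrthToDegreeLT.linearCombination hso' hdo' hso hdo 2⁻¹ 2⁻¹ fun x => by simp; ring
    · exact OrthToDegreeLT.linearCombination hso' hdo' hso hdo 2⁻¹ (-2⁻¹) fun x => by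
        simp; ring

lemma IsCoupledProj.eq_of_isGaussRadauProj (hab : a < b) {u φ : ℝ → ℝ}
    (hu : IntervalIntegrable u volume a b) (hφ : IntervalIntegrable φ volume a b)
    {p q Pa Pb : ℝ[X]} (hpq : IsCoupledProj k a b u φ p q)
    (hPa : IsGaussRadauProj k a b a (fun x => u x + φ x) Pa)
    (hPb : IsGaussRadauProj k a b b (fun x => u x - φ x) Pb) :
    p = (1 / 2 : ℝ) • (Pa + Pb) ∧ q = (1 / 2 : ℝ) • (Pa - Pb) := by
  obtain ⟨hsum, hdiff⟩ := (isCoupledProj_iff hu hφ).1 hpq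
  obtain rfl := hsum.unique hab (Or.inl le_rfl) (hu.add hφ) hPa
  obtain rfl := hdiff.unique hab (Or.inr le_rfl) (hu.sub hφ) hPb
  constructor <;> module

end GaussRadau

/-- Lemma 2.6 of the paper (cell-local form): the coupled auxiliary projection exists and is
unique, and it decouples into Gauss-Radau projections of `u + φ` (matching at `a`) and
`u - φ` (matching at `b`): `p = (1/2)(P_a(u+φ) + P_b(u-φ))`, `q = (1/2)(P_a(u+φ) - P_b(u-φ))`. -/
theorem coupled_projection_exists_unique_and_decouples (k : ℕ) (a b : ℝ) (hab : a < b)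
    (u φ : ℝ → ℝ) (hu : ContinuousOn u (Set.Icc a b)) (hφ : ContinuousOn φ (Set.Icc a b)) :
    (∃! pq : Polynomial ℝ × Polynomial ℝ, IsCoupledProj k a b u φ pq.1 pq.2) ∧
    ∀ p q Pa Pb : Polynomial ℝ, IsCoupledProj k a b u φ p q →
      IsGaussRadauProj k a b a (fun x => u x + φ x) Pa →
      IsGaussRadauProj k a b b (fun x => u x - φ x) Pb →
      p = (1 / 2 : ℝ) • (Pa + Pb) ∧ q = (1 / 2 : ℝ) • (Pa - Pb) := by
  have hu' := hu.intervalIntegrable_of_Icc (μ := volume) hab.le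
  have hφ' := hφ.intervalIntegrable_of_Icc (μ := volume) hab.le
  obtain ⟨Pa, hPa⟩ := exists_isGaussRadauProj (k := k) hab (Or.inl le_rfl) (hu'.add hφ')
  obtain ⟨Pb, hPb⟩ := exists_isGaussRadauProj (k := k) hab (Or.inr le_rfl) (hu'.sub hφ')
  have hcoupled :
      IsCoupledProj k a b u φ ((1 / 2 : ℝ) • (Pa + Pb)) ((1 / 2 : ℝ) • (Pa - Pb)) := by
    rw [isCoupledProj_iff hu' hφ']
    constructor
    · convert hPa using 1; module
    · convert hPb using 1; module
  refine ⟨⟨(_, _), hcoupled, fun pq hpq => ?_⟩,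
    fun p q Pa' Pb' hpq hPa' hPb' => hpq.eq_of_isGaussRadauProj hab hu' hφ' hPa' hPb'⟩
  obtain ⟨hp, hq⟩ := hpq.eq_of_isGaussRadauProj hab hu' hφ' hPa hPb
  exact Prod.ext hp hq
end

section
/- Let n_x, n_y be real numbers with n_x² + n_y² = 1, and let B₁ and B₂ be the real symmetric 5×5 matrices whose only nonzero entries are B₁(1,4) = B₁(4,1) = B₁(3,5) = B₁(5,3) = -1 and B₂(2,5) = B₂(5,2) = B₂(3,4) = B₂(4,3) = -1. Then the characteristic polynomial of B_n = n_x B₁ + n_y B₂ equals X (X² - (1 + n_x n_y)) (X² - (1 - n_x n_y)); in particular B_n has the two positive eigenvalues √(1 + n_x n_y) and √(1 - n_x n_y), the two negative eigenvalues -√(1 + n_x n_y) and -√(1 - n_x n_y), and the eigenvalue 0. -/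
/-!
Writing the unknowns as stresses `(σ_xx, σ_yy, σ_xy)` and velocities `(v, w)`, the matrix
`B_n` is the block matrix `[[0, -Mᵀ], [-M, 0]]` with `M = [[n_x, 0, n_y], [0, n_y, n_x]]`, so its
characteristic polynomial is `X · det (X² - M Mᵀ)`. Here `M Mᵀ` has diagonal `n_x² + n_y²` and
off-diagonal `n_x n_y`, with eigenvalues `n_x² + n_y² ± n_x n_y`, and for a unit direction these
are `1 ± n_x n_y ≥ 1/2 > 0`.
-/

open Matrix Polynomial

def elasticB₁ : Matrix (Fin 5) (Fin 5) ℝ :=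
  !![0, 0, 0, -1, 0;
     0, 0, 0, 0, 0;
     0, 0, 0, 0, -1;
     -1, 0, 0, 0, 0;
     0, 0, -1, 0, 0]

def elasticB₂ : Matrix (Fin 5) (Fin 5) ℝ :=
  !![0, 0, 0, 0, 0;
     0, 0, 0, 0, -1;
     0, 0, 0, -1, 0;
     0, 0, -1, 0, 0;
     0, -1, 0, 0, 0]

theorem charmatrix_smul_elasticB₁_add_smul_elasticB₂ (nx ny : ℝ) :
    charmatrix (nx • elasticB₁ + ny • elasticB₂) =
      !![X, 0, 0, C nx, 0;
         0, X, 0, 0, C ny;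
         0, 0, X, C ny, C nx;
         C nx, 0, C ny, X, 0;
         0, C ny, C nx, 0, X] := by
  ext i j : 2
  fin_cases i <;> fin_cases j <;> simp [elasticB₁, elasticB₂]

theorem charpoly_smul_elasticB₁_add_smul_elasticB₂ (nx ny : ℝ) :
    (nx • elasticB₁ + ny • elasticB₂).charpoly =
      X * (X ^ 2 - C (nx ^ 2 + ny ^ 2 + nx * ny)) * (X ^ 2 - C (nx ^ 2 + ny ^ 2 - nx * ny)) := by
  rw [charpoly, charmatrix_smul_elasticB₁_add_smul_elasticB₂]
  simp [det_succ_row_zero, Fin.sum_univ_succ, Fin.succAbove]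
  ring

theorem isRoot_X_sq_sub_C_sqrt {a : ℝ} (ha : 0 ≤ a) : (X ^ 2 - C a).IsRoot (√a) := by
  simp [Real.sq_sqrt ha]

theorem isRoot_X_sq_sub_C_neg_sqrt {a : ℝ} (ha : 0 ≤ a) : (X ^ 2 - C a).IsRoot (-√a) := by
  simp [Real.sq_sqrt ha]

/-- Eigenvalue structure of the 2D isotropic elastodynamics system: for a unit direction
`n = (n_x, n_y)` and the symmetric coefficient matrices `B₁`, `B₂` of the stress-velocity
form, the matrix `B_n = n_x B₁ + n_y B₂` has characteristic polynomial
`X (X² - (1 + n_x n_y)) (X² - (1 - n_x n_y))`; in particular it has the two positive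
eigenvalues `√(1 ± n_x n_y)`, the two negative eigenvalues `-√(1 ± n_x n_y)`, and the
eigenvalue `0`. -/
theorem elastodynamics_paired_eigenvalues (nx ny : ℝ) (hn : nx ^ 2 + ny ^ 2 = 1) :
    let B₁ : Matrix (Fin 5) (Fin 5) ℝ :=
      !![0, 0, 0, -1, 0;
         0, 0, 0, 0, 0;
         0, 0, 0, 0, -1;
         -1, 0, 0, 0, 0;
         0, 0, -1, 0, 0]
    let B₂ : Matrix (Fin 5) (Fin 5) ℝ :=
      !![0, 0, 0, 0, 0;
         0, 0, 0, 0, -1;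
         0, 0, 0, -1, 0;
         0, 0, -1, 0, 0;
         0, -1, 0, 0, 0]
    let Bn := nx • B₁ + ny • B₂
    Bn.charpoly = X * (X ^ 2 - C (1 + nx * ny)) * (X ^ 2 - C (1 - nx * ny)) ∧
      0 < Real.sqrt (1 + nx * ny) ∧ 0 < Real.sqrt (1 - nx * ny) ∧
      Real.sqrt (1 + nx * ny) ∈ spectrum ℝ Bn ∧
      Real.sqrt (1 - nx * ny) ∈ spectrum ℝ Bn ∧
      -Real.sqrt (1 + nx * ny) ∈ spectrum ℝ Bn ∧
      -Real.sqrt (1 - nx * ny) ∈ spectrum ℝ Bn ∧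
      (0 : ℝ) ∈ spectrum ℝ Bn := by
  have hp : 0 < 1 + nx * ny := by nlinarith [sq_nonneg (nx + ny)]
  have hm : 0 < 1 - nx * ny := by nlinarith [sq_nonneg (nx - ny)]
  intro B₁ B₂ Bn
  have hcp : Bn.charpoly = X * (X ^ 2 - C (1 + nx * ny)) * (X ^ 2 - C (1 - nx * ny)) :=
    hn ▸ charpoly_smul_elasticB₁_add_smul_elasticB₂ nx ny
  have root_plus {μ : ℝ} (h : (X ^ 2 - C (1 + nx * ny)).IsRoot μ) : μ ∈ spectrum ℝ Bn :=
    mem_spectrum_of_isRoot_charpoly <| hcp ▸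
      root_mul_right_of_isRoot _ (root_mul_left_of_isRoot _ h)
  have root_minus {μ : ℝ} (h : (X ^ 2 - C (1 - nx * ny)).IsRoot μ) : μ ∈ spectrum ℝ Bn :=
    mem_spectrum_of_isRoot_charpoly <| hcp ▸ root_mul_left_of_isRoot _ h
  refine ⟨hcp, Real.sqrt_pos.mpr hp, Real.sqrt_pos.mpr hm,
    root_plus (isRoot_X_sq_sub_C_sqrt hp.le), root_minus (isRoot_X_sq_sub_C_sqrt hm.le),
    root_plus (isRoot_X_sq_sub_C_neg_sqrt hp.le), root_minus (isRoot_X_sq_sub_C_neg_sqrt hm.le),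
    mem_spectrum_of_isRoot_charpoly (by simp [hcp])⟩
end
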